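/- Let p_1, p_2, p_3, p_{12}, p_{13}, p_{23} be nonnegative reals satisfying p_1 ≤ p_{12} + p_{13}, p_2 ≤ p_{12} + p_{23}, p_3 ≤ p_{13} + p_{23}, p_{23} ≤ p_2 + p_3, p_{13} ≤ p_1 + p_3, and p_{12} ≤ p_1 + p_2. Form the directed star gadget on node set {1, 2, 3, v_e} with, for each i ∈ {1,2,3}, a directed edge (i, v_e) of weight p_i and a directed edge (v_e, i) of weight p_{jk}, where {j, k} = {1,2,3} \ {i}. Then for every nonempty proper subset S ⊂ {1,2,3}, the minimum directed cut value over T ⊆ {1,2,3,v_e} with T ∩ {1,2,3} = S equals p_S, where p_{\{i\}} = p_i and p_{\{i,j\}} = p_{ij}. In particular, every submodular splitting function on a 3-node hyperedge can be modeled by a hyperedge s-t cut gadget. -/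
import Mathlib


/-- The directed cut function of a weighted directed graph on vertex set `α`. -/
def dirCut {α : Type*} [Fintype α] [DecidableEq α] (w : α → α → ℝ) (T : Finset α) : ℝ :=
  ∑ i ∈ T, ∑ j ∈ Tᶜ, w i j

/-- Edge weights of the directed star gadget on `{1,2,3} ∪ {v_e}` (nodes `Fin 3 ⊕ Unit`),
given penalties `p S` for subsets `S` of the 3-node hyperedge: node `i` has a directed
edge of weight `p {i}` to `v_e`, and `v_e` has a directed edge of weight `p ({i}ᶜ)`
(the penalty of the complementary pair) to node `i`. -/
def starW3 (p : Finset (Fin 3) → ℝ) : (Fin 3 ⊕ Unit) → (Fin 3 ⊕ Unit) → ℝ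
  | Sum.inl i, Sum.inr _ => p {i}
  | Sum.inr _, Sum.inl i => p ({i}ᶜ)
  | _, _ => 0

lemma Tcases (S : Finset (Fin 3)) (T : Finset (Fin 3 ⊕ Unit))
    (h : ∀ v : Fin 3, Sum.inl v ∈ T ↔ v ∈ S) :
    T = S.image Sum.inl ∨ T = insert (Sum.inr ()) (S.image Sum.inl) := by
  by_cases hv : Sum.inr () ∈ T
  · right; ext x
    rcases x with v | u
    · simp [h v]
    · cases u; simp [hv]
  · left; ext x
    rcases x with v | u
    · simp [h v]
    · cases u; simp [hv]

lemma c0 : ({0}ᶜ : Finset (Fin 3)) = {1, 2} := by decide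
lemma c1 : ({1}ᶜ : Finset (Fin 3)) = {0, 2} := by decide
lemma c2 : ({2}ᶜ : Finset (Fin 3)) = {0, 1} := by decide

/-- if the six penalties of a (submodular) splitting function on a
3-node hyperedge satisfy the stated inequalities, then for every nonempty proper
subset `S` of the hyperedge, the minimum directed cut of the star gadget over all
`T` with `T ∩ e = S` equals `p S`; i.e., the gadget models the splitting function. -/
theorem stmt_10 (p : Finset (Fin 3) → ℝ)
    (hnn : ∀ S : Finset (Fin 3), 0 ≤ p S)
    (h1 : p {0} ≤ p {0, 1} + p {0, 2})
    (h2 : p {1} ≤ p {0, 1} + p {1, 2})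
    (h3 : p {2} ≤ p {0, 2} + p {1, 2})
    (h4 : p {1, 2} ≤ p {1} + p {2})
    (h5 : p {0, 2} ≤ p {0} + p {2})
    (h6 : p {0, 1} ≤ p {0} + p {1})
    (S : Finset (Fin 3)) (hS1 : S ≠ ∅) (hS2 : S ≠ Finset.univ) :
    IsLeast {r : ℝ | ∃ T : Finset (Fin 3 ⊕ Unit),
        (∀ v : Fin 3, Sum.inl v ∈ T ↔ v ∈ S) ∧ dirCut (starW3 p) T = r}
      (p S) := by
  have key : ∀ S : Finset (Fin 3), S ≠ ∅ → S ≠ Finset.univ →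
      (S = {0} ∨ S = {1} ∨ S = {2} ∨ S = {0, 1} ∨ S = {0, 2} ∨ S = {1, 2}) := by
    decide
  have e0 : (({0} : Finset (Fin 3)).image Sum.inl : Finset (Fin 3 ⊕ Unit))
      = {Sum.inl 0} := by decide
  have e1 : (({1} : Finset (Fin 3)).image Sum.inl : Finset (Fin 3 ⊕ Unit))
      = {Sum.inl 1} := by decide
  have e2 : (({2} : Finset (Fin 3)).image Sum.inl : Finset (Fin 3 ⊕ Unit))
      = {Sum.inl 2} := by decide
  have e01 : (({0, 1} : Finset (Fin 3)).image Sum.inl : Finset (Fin 3 ⊕ Unit))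
      = {Sum.inl 0, Sum.inl 1} := by decide
  have e02 : (({0, 2} : Finset (Fin 3)).image Sum.inl : Finset (Fin 3 ⊕ Unit))
      = {Sum.inl 0, Sum.inl 2} := by decide
  have e12 : (({1, 2} : Finset (Fin 3)).image Sum.inl : Finset (Fin 3 ⊕ Unit))
      = {Sum.inl 1, Sum.inl 2} := by decide
  -- cut values, without v_e
  have k0 : dirCut (starW3 p) {Sum.inl 0} = p {0} := by
    have hc : ({Sum.inl 0}ᶜ : Finset (Fin 3 ⊕ Unit))
        = {Sum.inl 1, Sum.inl 2, Sum.inr ()} := by decide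
    simp [dirCut, hc, starW3]
  have k1 : dirCut (starW3 p) {Sum.inl 1} = p {1} := by
    have hc : ({Sum.inl 1}ᶜ : Finset (Fin 3 ⊕ Unit))
        = {Sum.inl 0, Sum.inl 2, Sum.inr ()} := by decide
    simp [dirCut, hc, starW3]
  have k2 : dirCut (starW3 p) {Sum.inl 2} = p {2} := by
    have hc : ({Sum.inl 2}ᶜ : Finset (Fin 3 ⊕ Unit))
        = {Sum.inl 0, Sum.inl 1, Sum.inr ()} := by decide
    simp [dirCut, hc, starW3]
  have k01 : dirCut (starW3 p) {Sum.inl 0, Sum.inl 1} = p {0} + p {1} := by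
    have hc : ({Sum.inl 0, Sum.inl 1}ᶜ : Finset (Fin 3 ⊕ Unit))
        = {Sum.inl 2, Sum.inr ()} := by decide
    simp [dirCut, hc, starW3]
  have k02 : dirCut (starW3 p) {Sum.inl 0, Sum.inl 2} = p {0} + p {2} := by
    have hc : ({Sum.inl 0, Sum.inl 2}ᶜ : Finset (Fin 3 ⊕ Unit))
        = {Sum.inl 1, Sum.inr ()} := by decide
    simp [dirCut, hc, starW3]
  have k12 : dirCut (starW3 p) {Sum.inl 1, Sum.inl 2} = p {1} + p {2} := by
    have hc : ({Sum.inl 1, Sum.inl 2}ᶜ : Finset (Fin 3 ⊕ Unit))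
        = {Sum.inl 0, Sum.inr ()} := by decide
    simp [dirCut, hc, starW3]
  -- cut values, with v_e
  have m0 : dirCut (starW3 p) {Sum.inr (), Sum.inl 0} = p {0, 2} + p {0, 1} := by
    have hc : ({Sum.inr (), Sum.inl 0}ᶜ : Finset (Fin 3 ⊕ Unit))
        = {Sum.inl 1, Sum.inl 2} := by decide
    simp [dirCut, hc, starW3, c1, c2]
  have m1 : dirCut (starW3 p) {Sum.inr (), Sum.inl 1} = p {1, 2} + p {0, 1} := by
    have hc : ({Sum.inr (), Sum.inl 1}ᶜ : Finset (Fin 3 ⊕ Unit))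
        = {Sum.inl 0, Sum.inl 2} := by decide
    simp [dirCut, hc, starW3, c0, c2]
  have m2 : dirCut (starW3 p) {Sum.inr (), Sum.inl 2} = p {1, 2} + p {0, 2} := by
    have hc : ({Sum.inr (), Sum.inl 2}ᶜ : Finset (Fin 3 ⊕ Unit))
        = {Sum.inl 0, Sum.inl 1} := by decide
    simp [dirCut, hc, starW3, c0, c1]
  have m01 : dirCut (starW3 p) {Sum.inr (), Sum.inl 0, Sum.inl 1} = p {0, 1} := by
    have hc : ({Sum.inr (), Sum.inl 0, Sum.inl 1}ᶜ : Finset (Fin 3 ⊕ Unit))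
        = {Sum.inl 2} := by decide
    simp [dirCut, hc, starW3, c2]
  have m02 : dirCut (starW3 p) {Sum.inr (), Sum.inl 0, Sum.inl 2} = p {0, 2} := by
    have hc : ({Sum.inr (), Sum.inl 0, Sum.inl 2}ᶜ : Finset (Fin 3 ⊕ Unit))
        = {Sum.inl 1} := by decide
    simp [dirCut, hc, starW3, c1]
  have m12 : dirCut (starW3 p) {Sum.inr (), Sum.inl 1, Sum.inl 2} = p {1, 2} := by
    have hc : ({Sum.inr (), Sum.inl 1, Sum.inl 2}ᶜ : Finset (Fin 3 ⊕ Unit))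
        = {Sum.inl 0} := by decide
    simp [dirCut, hc, starW3, c0]
  rcases key S hS1 hS2 with rfl | rfl | rfl | rfl | rfl | rfl
  · constructor
    · exact ⟨{Sum.inl 0}, by decide, k0⟩
    · rintro r ⟨T, hT, rfl⟩
      rcases Tcases _ _ hT with rfl | rfl <;> rw [e0]
      · rw [k0]
      · rw [show insert (Sum.inr ()) ({Sum.inl 0} : Finset (Fin 3 ⊕ Unit))
            = {Sum.inr (), Sum.inl 0} from rfl, m0]; linarith
  · constructor
    · exact ⟨{Sum.inl 1}, by decide, k1⟩
    · rintro r ⟨T, hT, rfl⟩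
      rcases Tcases _ _ hT with rfl | rfl <;> rw [e1]
      · rw [k1]
      · rw [show insert (Sum.inr ()) ({Sum.inl 1} : Finset (Fin 3 ⊕ Unit))
            = {Sum.inr (), Sum.inl 1} from rfl, m1]; linarith
  · constructor
    · exact ⟨{Sum.inl 2}, by decide, k2⟩
    · rintro r ⟨T, hT, rfl⟩
      rcases Tcases _ _ hT with rfl | rfl <;> rw [e2]
      · rw [k2]
      · rw [show insert (Sum.inr ()) ({Sum.inl 2} : Finset (Fin 3 ⊕ Unit))
            = {Sum.inr (), Sum.inl 2} from rfl, m2]; linarith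
  · constructor
    · exact ⟨{Sum.inr (), Sum.inl 0, Sum.inl 1}, by decide, m01⟩
    · rintro r ⟨T, hT, rfl⟩
      rcases Tcases _ _ hT with rfl | rfl <;> rw [e01]
      · rw [k01]; linarith
      · rw [show insert (Sum.inr ()) ({Sum.inl 0, Sum.inl 1} : Finset (Fin 3 ⊕ Unit))
            = {Sum.inr (), Sum.inl 0, Sum.inl 1} from rfl, m01]
  · constructor
    · exact ⟨{Sum.inr (), Sum.inl 0, Sum.inl 2}, by decide, m02⟩
    · rintro r ⟨T, hT, rfl⟩
      rcases Tcases _ _ hT with rfl | rfl <;> rw [e02]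
      · rw [k02]; linarith
      · rw [show insert (Sum.inr ()) ({Sum.inl 0, Sum.inl 2} : Finset (Fin 3 ⊕ Unit))
            = {Sum.inr (), Sum.inl 0, Sum.inl 2} from rfl, m02]
  · constructor
    · exact ⟨{Sum.inr (), Sum.inl 1, Sum.inl 2}, by decide, m12⟩
    · rintro r ⟨T, hT, rfl⟩
      rcases Tcases _ _ hT with rfl | rfl <;> rw [e12]
      · rw [k12]; linarith
      · rw [show insert (Sum.inr ()) ({Sum.inl 1, Sum.inl 2} : Finset (Fin 3 ⊕ Unit))
            = {Sum.inr (), Sum.inl 1, Sum.inl 2} from rfl, m12]
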